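/- Let L be an algebraic lattice and let (σ_ψ)_{ψ∈Ψ} be a family of algebraic (finitary) closure operators on L that is directed under the pointwise order (any two members have a common upper bound in the family). Then the pointwise supremum x ↦ ⨆_{ψ∈Ψ} σ_ψ(x) is itself an algebraic closure operator and equals the join of the family: for every closure operator τ on L with σ_ψ(x) ≤ τ(x) for all ψ and x, one has ⨆_{ψ∈Ψ} σ_ψ(x) ≤ τ(x) for all x. -/

import Mathlib

/-!
Finitarity is what makes the directed supremum `φ x = ⨆ ψ, σ ψ x` idempotent. To bound
`σ ψ (φ x)` it suffices to bound `σ ψ k` for compact `k ≤ φ x`; by compactness and directedness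
such a `k` already lies below a single `σ ψ' x`, and for a common upper bound `c` of `ψ` and `ψ'`
we get `σ ψ k ≤ σ c (σ c x) = σ c x ≤ φ x`.
-/

def IsClosureOp {L : Type*} [CompleteLattice L] (φ : L → L) : Prop :=
  (∀ x, x ≤ φ x) ∧ (∀ x, φ (φ x) = φ x) ∧ (∀ x y : L, x ≤ y → φ x ≤ φ y)

def Finitary {L : Type*} [CompleteLattice L] (φ : L → L) : Prop :=
  ∀ x : L, φ x = ⨆ k ∈ {k : L | IsCompactElement k ∧ k ≤ x}, φ k

section

variable {L : Type*} [CompleteLattice L]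

theorem IsCompactElement.exists_le_of_le_iSup_of_directed {ι : Type*} [Nonempty ι]
    {f : ι → L} (hf : Directed (· ≤ ·) f) {k : L} (hk : IsCompactElement k)
    (hle : k ≤ ⨆ i, f i) : ∃ i, k ≤ f i := by
  obtain ⟨-, ⟨i, rfl⟩, hi⟩ :=
    hk (Set.range f) _ (Set.range_nonempty f) hf.directedOn_range isLUB_iSup hle
  exact ⟨i, hi⟩

namespace Finitary

variable {φ : L → L}

theorem le_of_forall_isCompactElement (hφ : Finitary φ) {x y : L}
    (h : ∀ k, IsCompactElement k → k ≤ x → φ k ≤ y) : φ x ≤ y := by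
  rw [hφ x]
  exact iSup₂_le fun k hk => h k hk.1 hk.2

theorem le_apply (hφ : Finitary φ) {k x : L} (hk : IsCompactElement k) (hkx : k ≤ x) :
    φ k ≤ φ x := by
  rw [hφ x]
  exact le_iSup₂ (f := fun k _ => φ k) k ⟨hk, hkx⟩

theorem monotone (hφ : Finitary φ) : Monotone φ := fun _ _ hxy =>
  hφ.le_of_forall_isCompactElement fun _ hk hkx => hφ.le_apply hk (hkx.trans hxy)

protected theorem iSup {ι : Type*} {σ : ι → L → L} (hσ : ∀ i, Finitary (σ i)) :
    Finitary fun x => ⨆ i, σ i x := fun _ =>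
  le_antisymm
    (iSup_le fun i => (hσ i).le_of_forall_isCompactElement fun k hk hkx =>
      (le_iSup (fun i => σ i k) i).trans (le_iSup₂ (f := fun k _ => ⨆ i, σ i k) k ⟨hk, hkx⟩))
    (iSup₂_le fun _ hk => iSup_mono fun i => (hσ i).monotone hk.2)

end Finitary

namespace IsClosureOp

variable {ι : Type*} {σ : ι → L → L}

theorem apply_iSup_le_iSup_of_directed (hdir : Directed (· ≤ ·) σ)
    (hco : ∀ i, IsClosureOp (σ i)) (hfin : ∀ i, Finitary (σ i)) (i : ι) (x : L) :
    σ i (⨆ j, σ j x) ≤ ⨆ j, σ j x := by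
  have : Nonempty ι := ⟨i⟩
  refine (hfin i).le_of_forall_isCompactElement fun k hk hkx => ?_
  have hdirx : Directed (· ≤ ·) fun j => σ j x :=
    hdir.mono_comp _ (g := fun f => f x) fun _ _ h => h x
  obtain ⟨j, hkj⟩ := hk.exists_le_of_le_iSup_of_directed hdirx hkx
  obtain ⟨c, hic, hjc⟩ := hdir i j
  calc σ i k ≤ σ c k := hic k
    _ ≤ σ c (σ c x) := (hco c).2.2 _ _ (hkj.trans (hjc x))
    _ = σ c x := (hco c).2.1 x
    _ ≤ ⨆ j, σ j x := le_iSup (fun j => σ j x) c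

theorem iSup_of_directed [Nonempty ι] (hdir : Directed (· ≤ ·) σ)
    (hco : ∀ i, IsClosureOp (σ i)) (hfin : ∀ i, Finitary (σ i)) :
    IsClosureOp fun x => ⨆ i, σ i x := by
  have hext : ∀ x, x ≤ ⨆ i, σ i x := fun x =>
    ((hco (Classical.arbitrary ι)).1 x).trans (le_iSup (fun i => σ i x) _)
  have hmono : ∀ x y, x ≤ y → ⨆ i, σ i x ≤ ⨆ i, σ i y := fun x y hxy =>
    iSup_mono fun i => (hco i).2.2 x y hxy
  refine ⟨hext, fun x => le_antisymm ?_ (hmono _ _ (hext x)), hmono⟩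
  exact iSup_le fun i => apply_iSup_le_iSup_of_directed hdir hco hfin i x

end IsClosureOp

end

theorem directed_sup_aco_general {L : Type*} [CompleteLattice L]
    {Ψ : Type*} [Nonempty Ψ] (σ : Ψ → L → L) (hdir : Directed (· ≤ ·) σ)
    (hco : ∀ ψ, IsClosureOp (σ ψ)) (hfin : ∀ ψ, Finitary (σ ψ)) :
    IsClosureOp (fun x : L => ⨆ ψ, σ ψ x) ∧
    Finitary (fun x : L => ⨆ ψ, σ ψ x) ∧
    ∀ τ : L → L, IsClosureOp τ → (∀ (ψ : Ψ) (x : L), σ ψ x ≤ τ x) →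
      ∀ x : L, (⨆ ψ, σ ψ x) ≤ τ x :=
  ⟨IsClosureOp.iSup_of_directed hdir hco hfin, Finitary.iSup hfin,
    fun _ _ hub x => iSup_le fun ψ => hub ψ x⟩

/-- The pointwise supremum of a (nonempty) pointwise-directed family of algebraic
closure operators on an algebraic lattice is an algebraic closure operator, and
it is the join of the family: it is below every closure operator that is an upper
bound of the family. -/
theorem directed_sup_aco {L : Type*} [CompleteLattice L] [IsCompactlyGenerated L]
    {Ψ : Type*} [Nonempty Ψ] (σ : Ψ → L → L) (hdir : Directed (· ≤ ·) σ)
    (hco : ∀ ψ, IsClosureOp (σ ψ)) (hfin : ∀ ψ, Finitary (σ ψ)) :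
    IsClosureOp (fun x : L => ⨆ ψ, σ ψ x) ∧
    Finitary (fun x : L => ⨆ ψ, σ ψ x) ∧
    ∀ τ : L → L, IsClosureOp τ → (∀ (ψ : Ψ) (x : L), σ ψ x ≤ τ x) →
      ∀ x : L, (⨆ ψ, σ ψ x) ≤ τ x :=
  directed_sup_aco_general σ hdir hco hfin
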